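/- Let T be the 6-dimensional algebra over ℂ with basis e1,...,e6 and anticommutative multiplication determined by e1e2 = e3, e1e3 = e4, e1e4 = e5, e2e3 = e5, e2e4 = e6 (all other products of basis elements zero). Then T is a nilpotent Tortkara algebra which is not a Malcev algebra. -/

import Mathlib

/-- The Jacobian `J(a,b,c) = (ab)c + (bc)a + (ca)b` of a multiplication. -/
def Jac {A : Type*} [Add A] (mul : A → A → A) (a b c : A) : A :=
  mul (mul a b) c + mul (mul b c) a + mul (mul c a) b

/-- A multiplication is Tortkara if it is anticommutative and satisfies
`(ab)(cb) = J(a,b,c)b`. -/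
def IsTortkara {A : Type*} [AddCommGroup A] (mul : A → A → A) : Prop :=
  (∀ x y, mul x y = - mul y x) ∧
  ∀ a b c, mul (mul a b) (mul c b) = mul (Jac mul a b c) b

/-- `IsProdOfLen mul n a` : `a` is a product (in some arrangement) of `n` elements. -/
inductive IsProdOfLen {A : Type*} (mul : A → A → A) : ℕ → A → Prop
  | single (a : A) : IsProdOfLen mul 1 a
  | mul {m n : ℕ} {a b : A} : IsProdOfLen mul m a → IsProdOfLen mul n b →
      IsProdOfLen mul (m + n) (mul a b)

/-- An algebra is nilpotent if all sufficiently long products vanish. -/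
def IsNilpotentAlg {A : Type*} [Zero A] (mul : A → A → A) : Prop :=
  ∃ N : ℕ, ∀ (n : ℕ) (x : A), N ≤ n → IsProdOfLen mul n x → x = 0

/-- The 6-dimensional algebra `T⁶₀₁` with `e₁e₂=e₃, e₁e₃=e₄, e₁e₄=e₅,
e₂e₃=e₅, e₂e₄=e₆` (anticommutative, other products zero). -/
def mulT601 (x y : Fin 6 → ℂ) : Fin 6 → ℂ :=
  ![0, 0, x 0 * y 1 - x 1 * y 0, x 0 * y 2 - x 2 * y 0,
    (x 0 * y 3 - x 3 * y 0) + (x 1 * y 2 - x 2 * y 1), x 1 * y 3 - x 3 * y 1]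

/-!
Give `e₁, …, e₆` the weights `1, 1, 2, 3, 4, 4`. Every product `eᵢeⱼ` is a combination of basis
vectors of weight at least `wt eᵢ + wt eⱼ` (strictly more for `e₂e₃ = e₅`), so a product of `n`
factors only has components of weight `≥ n`, and products of five or more factors vanish.
The Tortkara identity is a coordinate computation. For the Malcev identity take `w = x = e₁`,
`y = z = e₂`: the left side is `e₃e₃ = 0`, while on the right only `((e₂e₁)e₁)e₂ = -e₆` survives.
-/

section Filtration

variable {A : Type*} {mul : A → A → A} {F : ℕ → Set A}

theorem IsProdOfLen.mem_filtration (h1 : ∀ a, a ∈ F 1)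
    (hmul : ∀ {m n a b}, a ∈ F m → b ∈ F n → mul a b ∈ F (m + n))
    {n : ℕ} {x : A} (hx : IsProdOfLen mul n x) : x ∈ F n := by
  induction hx with
  | single a => exact h1 a
  | mul _ _ iha ihb => exact hmul iha ihb

theorem isNilpotentAlg_of_filtration [Zero A] (hF : Antitone F) (h1 : ∀ a, a ∈ F 1)
    (hmul : ∀ {m n a b}, a ∈ F m → b ∈ F n → mul a b ∈ F (m + n))
    {N : ℕ} (hN : ∀ x ∈ F N, x = 0) : IsNilpotentAlg mul :=
  ⟨N, fun _ _ hn hx => hN _ (hF hn (hx.mem_filtration h1 hmul))⟩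

end Filtration

namespace T601

def weight : Fin 6 → ℕ := ![1, 1, 2, 3, 4, 4]

def filtration (k : ℕ) : Set (Fin 6 → ℂ) := {x | ∀ i, weight i < k → x i = 0}

theorem filtration_antitone : Antitone filtration :=
  fun _ _ hkl _ hx i hi => hx i (lt_of_lt_of_le hi hkl)

theorem mem_filtration_one (x : Fin 6 → ℂ) : x ∈ filtration 1 := by
  intro i hi
  fin_cases i <;> simp [weight] at hi

theorem eq_zero_of_mem_filtration_five {x : Fin 6 → ℂ} (hx : x ∈ filtration 5) : x = 0 := by
  funext i
  exact hx i (by fin_cases i <;> decide)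

theorem apply_mul_apply_eq_zero {m n : ℕ} {a b : Fin 6 → ℂ} (ha : a ∈ filtration m)
    (hb : b ∈ filtration n) {i j : Fin 6} (hij : weight i + weight j < m + n) :
    a i * b j = 0 := by
  rcases lt_or_ge (weight i) m with hi | hi
  · rw [ha i hi, zero_mul]
  · rw [hb j (by omega), mul_zero]

theorem mul_mem_filtration {m n : ℕ} {a b : Fin 6 → ℂ} (ha : a ∈ filtration m)
    (hb : b ∈ filtration n) : mulT601 a b ∈ filtration (m + n) := by
  intro k hk
  fin_cases k <;>
    simp (disch := (simp [weight] at hk ⊢; omega)) [mulT601, apply_mul_apply_eq_zero ha hb]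

theorem isNilpotentAlg : IsNilpotentAlg mulT601 :=
  isNilpotentAlg_of_filtration filtration_antitone mem_filtration_one mul_mem_filtration
    fun _ => eq_zero_of_mem_filtration_five

theorem mul_anticomm (x y : Fin 6 → ℂ) : mulT601 x y = -mulT601 y x := by
  ext i
  fin_cases i <;>
    simp only [Fin.zero_eta, Fin.mk_one, Fin.reduceFinMk, mulT601, Pi.neg_apply,
      Matrix.cons_val] <;> ring

theorem isTortkara : IsTortkara mulT601 := by
  refine ⟨mul_anticomm, fun a b c => ?_⟩
  ext i
  fin_cases i <;>
    simp only [Fin.zero_eta, Fin.mk_one, Fin.reduceFinMk, mulT601, Jac, Pi.add_apply,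
      Matrix.cons_val] <;> ring

theorem malcev_identity_fails :
    let e₁ : Fin 6 → ℂ := Pi.single 0 1
    let e₂ : Fin 6 → ℂ := Pi.single 1 1
    mulT601 (mulT601 e₁ e₂) (mulT601 e₁ e₂) ≠
      mulT601 (mulT601 (mulT601 e₁ e₁) e₂) e₂ + mulT601 (mulT601 (mulT601 e₁ e₂) e₂) e₁ +
        mulT601 (mulT601 (mulT601 e₂ e₂) e₁) e₁ + mulT601 (mulT601 (mulT601 e₂ e₁) e₁) e₂ := by
  intro e₁ e₂ h
  simpa [e₁, e₂, mulT601] using congrFun h 5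

end T601

/-- `T⁶₀₁` is a nilpotent Tortkara algebra which is not a Malcev algebra. -/
theorem T601_tortkara_nilpotent_not_malcev :
    IsTortkara mulT601 ∧ IsNilpotentAlg mulT601 ∧
    ∃ w x y z : Fin 6 → ℂ,
      mulT601 (mulT601 w y) (mulT601 x z) ≠
        mulT601 (mulT601 (mulT601 w x) y) z + mulT601 (mulT601 (mulT601 x y) z) w +
          mulT601 (mulT601 (mulT601 y z) w) x + mulT601 (mulT601 (mulT601 z w) x) y :=
  ⟨T601.isTortkara, T601.isNilpotentAlg, _, _, _, _, T601.malcev_identity_fails⟩
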